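/- arXiv:2404.10670 — 2 statements merged into one kernel-verified Lean document; each statement's English description precedes it below -/
import Mathlib

section
/- Let G be a bipartite graph with bipartition V(G) = X ∪ Y. Then si(G) ≤ min{|X|, |Y|}. -/
/-- `(a, b, L)` is a `d`-simultaneous interval representation of `G`:
each vertex `v` gets a nonempty open interval `(a v, b v)` and a label set
`L v ⊆ {1,…,d}`, and distinct vertices are adjacent iff both their intervals
and their label sets intersect. -/
def IsSIRep {V : Type*} (G : SimpleGraph V) (d : ℕ)
    (a b : V → ℝ) (L : V → Finset (Fin d)) : Prop :=
  (∀ v, a v < b v) ∧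
  ∀ u v : V, u ≠ v →
    (G.Adj u v ↔ (Set.Ioo (a u) (b u) ∩ Set.Ioo (a v) (b v)).Nonempty ∧
      (L u ∩ L v).Nonempty)

/-- The simultaneous interval number of `G`. -/
noncomputable def si {V : Type*} (G : SimpleGraph V) : ℕ :=
  sInf {d | ∃ a b L, IsSIRep G d a b L}

/-!
Give every vertex of one side `X` the same long interval and its own label; give every other
vertex a private unit interval inside it, labelled by its neighbours in `X`. Two vertices of `X`
then share no label, two other vertices share no interval, and a vertex of `X` meets a vertex
outside `X` in both senses exactly when they are adjacent. This uses `|X|` labels, and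
exchanging the roles of the two sides gives the bound with `|Y|`.
-/

open Finset

lemma nonempty_Ioo_inter_Ioo_natCast {a b c d : ℕ} :
    (Set.Ioo (a : ℝ) b ∩ Set.Ioo (c : ℝ) d).Nonempty ↔ max a c < min b d := by
  rw [Set.Ioo_inter_Ioo, Set.nonempty_Ioo]
  norm_cast

lemma si_le_of_isSIRep {V : Type*} {G : SimpleGraph V} {d : ℕ} {a b : V → ℝ}
    {L : V → Finset (Fin d)} (h : IsSIRep G d a b L) : si G ≤ d :=
  Nat.sInf_le ⟨a, b, L, h⟩

namespace BipartiteRep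

variable {V : Type*} (G : SimpleGraph V) (X : Finset V)

open Classical in
noncomputable def labels (v : V) : Finset (Fin X.card) :=
  if h : v ∈ X then {X.equivFin ⟨v, h⟩} else univ.filter fun i => G.Adj (X.equivFin.symm i) v

section Intervals

variable [Fintype V]

open Classical in
noncomputable def left (v : V) : ℕ := if v ∈ X then 0 else Fintype.equivFin V v

open Classical in
noncomputable def right (v : V) : ℕ :=
  if v ∈ X then Fintype.card V else Fintype.equivFin V v + 1

end Intervals

variable {G X} {u v : V}

lemma labels_inter_nonempty_iff (hu : u ∈ X) (hv : v ∉ X) :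
    (labels G X u ∩ labels G X v).Nonempty ↔ G.Adj u v := by
  simp [labels, hu, hv, Finset.Nonempty]

lemma labels_disjoint (hu : u ∈ X) (hv : v ∈ X) (huv : u ≠ v) :
    ¬ (labels G X u ∩ labels G X v).Nonempty := by
  simp [labels, hu, hv, Finset.Nonempty, huv]

variable [Fintype V]

lemma left_lt_right (v : V) : left X v < right X v := by
  have := (Fintype.equivFin V v).pos
  by_cases hv : v ∈ X <;> simp [left, right, hv, this]

lemma intervals_meet (hu : u ∈ X) (hv : v ∉ X) :
    max (left X u) (left X v) < min (right X u) (right X v) := by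
  have := (Fintype.equivFin V v).isLt
  simp only [left, right, hu, hv, if_true, if_false]
  omega

lemma intervals_disjoint (hu : u ∉ X) (hv : v ∉ X) (huv : u ≠ v) :
    ¬ max (left X u) (left X v) < min (right X u) (right X v) := by
  have : (Fintype.equivFin V u : ℕ) ≠ Fintype.equivFin V v :=
    fun h => huv ((Fintype.equivFin V).injective (Fin.ext h))
  simp only [left, right, hu, hv, if_false]
  omega

theorem isSIRep (hX : G.IsIndepSet X) (hXc : G.IsIndepSet (↑X)ᶜ) :
    IsSIRep G X.card (fun v => left X v) (fun v => right X v) (labels G X) := by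
  refine ⟨fun v => Nat.cast_lt.2 (left_lt_right v), fun u v huv => ?_⟩
  simp only [nonempty_Ioo_inter_Ioo_natCast]
  by_cases hu : u ∈ X <;> by_cases hv : v ∈ X
  · simp [hX hu hv huv, labels_disjoint hu hv huv]
  · simp [intervals_meet hu hv, labels_inter_nonempty_iff hu hv]
  · rw [max_comm, min_comm, inter_comm, G.adj_comm]
    simp [intervals_meet hv hu, labels_inter_nonempty_iff hv hu]
  · simp [hXc hu hv huv, intervals_disjoint hu hv huv]

end BipartiteRep

theorem si_le_card_of_isIndepSet {V : Type*} [Fintype V] {G : SimpleGraph V} {X : Finset V}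
    (hX : G.IsIndepSet X) (hXc : G.IsIndepSet (↑X)ᶜ) : si G ≤ X.card :=
  si_le_of_isSIRep (BipartiteRep.isSIRep hX hXc)

theorem si_le_min_bipartition_general {V : Type*} [Fintype V] [DecidableEq V]
    (G : SimpleGraph V) (X Y : Finset V)
    (hU : X ∪ Y = Finset.univ)
    (hX : ∀ u ∈ X, ∀ v ∈ X, ¬ G.Adj u v)
    (hY : ∀ u ∈ Y, ∀ v ∈ Y, ¬ G.Adj u v) :
    si G ≤ min X.card Y.card := by
  have hXY : (X : Set V) ∪ Y = Set.univ := by exact_mod_cast hU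
  have hYX : (Y : Set V) ∪ X = Set.univ := by rwa [Set.union_comm]
  have hXi : G.IsIndepSet X := fun u hu v hv _ => hX u hu v hv
  have hYi : G.IsIndepSet Y := fun u hu v hv _ => hY u hu v hv
  exact le_min
    (si_le_card_of_isIndepSet hXi (hYi.mono (Set.compl_subset_iff_union.2 hXY)))
    (si_le_card_of_isIndepSet hYi (hXi.mono (Set.compl_subset_iff_union.2 hYX)))

/-- For a bipartite graph with bipartition `X ∪ Y`, `si G ≤ min |X| |Y|`. -/
theorem si_le_min_bipartition {V : Type*} [Fintype V] [DecidableEq V]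
    (G : SimpleGraph V) (X Y : Finset V)
    (hU : X ∪ Y = Finset.univ) (hD : Disjoint X Y)
    (hX : ∀ u ∈ X, ∀ v ∈ X, ¬ G.Adj u v)
    (hY : ∀ u ∈ Y, ∀ v ∈ Y, ¬ G.Adj u v) :
    si G ≤ min X.card Y.card :=
  si_le_min_bipartition_general G X Y hU hX hY
end

section
/- Every graph G satisfies thin(G) ≤ 2^{si(G)}, where thin(G) is the thinness of G. -/
/-- The thinness of a finite graph `G`: the least `k` admitting a partition of
the vertices into `k` classes and a vertex ordering such that for any indices
`i < j < l` with the `i`-th and `j`-th vertices in the same class, adjacency of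
the `i`-th and `l`-th vertices implies adjacency of the `j`-th and `l`-th. -/
noncomputable def thinness {V : Type*} [Fintype V] (G : SimpleGraph V) : ℕ :=
  sInf {k | ∃ (c : V → Fin k) (σ : Fin (Fintype.card V) ≃ V),
    ∀ i j l : Fin (Fintype.card V), i < j → j < l → c (σ i) = c (σ j) →
      G.Adj (σ i) (σ l) → G.Adj (σ j) (σ l)}


/-! Order the vertices by the right endpoints of their intervals and put two vertices in the same
class iff they carry the same label set; there are `2 ^ d` label sets. If `u`, `v`, `w` come in this
order, `u ~ w` and `L u = L v`, then the interval of `w` meets that of `u`, so it reaches left of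
`b u ≤ b v` while ending right of `b v`, hence meets the interval of `v`; and `L v = L u` meets
`L w`. So `v ~ w`. -/

open Set

lemma Ioo_inter_Ioo_nonempty_of_right_le {α : Type*} [LinearOrder α] [DenselyOrdered α]
    {a₁ b₁ a₂ b₂ a₃ b₃ : α} (h₂ : a₂ < b₂)
    (h₁₂ : b₁ ≤ b₂) (h₂₃ : b₂ ≤ b₃) (h : (Ioo a₁ b₁ ∩ Ioo a₃ b₃).Nonempty) :
    (Ioo a₂ b₂ ∩ Ioo a₃ b₃).Nonempty := by
  obtain ⟨x, ⟨-, hx₁⟩, hx₃, -⟩ := h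
  rw [Ioo_inter_Ioo, nonempty_Ioo, min_eq_left h₂₃]
  exact max_lt h₂ (hx₃.trans (hx₁.trans_le h₁₂))

namespace IsSIRep

variable {V : Type*} {G : SimpleGraph V} {d : ℕ} {a b : V → ℝ} {L : V → Finset (Fin d)}

lemma adj_of_right_le (h : IsSIRep G d a b L) {u v w : V} (huv : b u ≤ b v) (hvw : b v ≤ b w)
    (hL : L u = L v) (hne : v ≠ w) (hadj : G.Adj u w) : G.Adj v w := by
  obtain ⟨hIoo, hlab⟩ := (h.2 u w hadj.ne).mp hadj
  refine (h.2 v w hne).mpr ⟨?_, hL ▸ hlab⟩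
  exact Ioo_inter_Ioo_nonempty_of_right_le (h.1 v) huv hvw hIoo

end IsSIRep

lemma exists_isSIRep {V : Type*} [Finite V] (G : SimpleGraph V) :
    ∃ d a b L, IsSIRep G d a b L := by
  classical
  have := Fintype.ofFinite V
  -- one label per edge: a vertex carries the labels of its incident edges
  let e : Sym2 V ≃ Fin (Fintype.card (Sym2 V)) := Fintype.equivFin (Sym2 V)
  refine ⟨_, fun _ => 0, fun _ => 1, fun v => (G.neighborFinset v).image (fun u => e s(u, v)),
    fun _ => zero_lt_one, fun u v huv => ⟨fun hadj => ?_, ?_⟩⟩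
  · refine ⟨⟨1 / 2, by norm_num⟩, e s(u, v), ?_⟩
    simp only [Finset.mem_inter, Finset.mem_image, SimpleGraph.mem_neighborFinset]
    exact ⟨⟨v, hadj, by rw [Sym2.eq_swap]⟩, u, hadj.symm, rfl⟩
  · rintro ⟨-, x, hx⟩
    simp only [Finset.mem_inter, Finset.mem_image, SimpleGraph.mem_neighborFinset] at hx
    obtain ⟨⟨p, hp, rfl⟩, q, hq, hqp⟩ := hx
    rcases Sym2.eq_iff.mp (e.injective hqp) with ⟨-, rfl⟩ | ⟨rfl, -⟩
    · exact absurd rfl huv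
    · exact hq.symm

-- The vertex order sorts by `f`, breaking ties arbitrarily; hence the hypothesis on `≤`.
lemma thinness_le_of_consistent_key {V α : Type*} [Fintype V] [LinearOrder α] {G : SimpleGraph V}
    {k : ℕ} (c : V → Fin k) (f : V → α)
    (h : ∀ u v w, f u ≤ f v → f v ≤ f w → v ≠ w → c u = c v → G.Adj u w → G.Adj v w) :
    thinness G ≤ k := by
  let e : Fin (Fintype.card V) ≃ V := (Fintype.equivFin V).symm
  let σ : Fin (Fintype.card V) ≃ V := (Tuple.sort (f ∘ e)).trans e
  have hσ : Monotone (f ∘ σ) := Tuple.monotone_sort (f ∘ e)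
  exact Nat.sInf_le ⟨c, σ, fun i j l hij hjl hc hadj =>
    h _ _ _ (hσ hij.le) (hσ hjl.le) (σ.injective.ne hjl.ne) hc hadj⟩

lemma thinness_le_two_pow_of_isSIRep {V : Type*} [Fintype V] {G : SimpleGraph V} {d : ℕ}
    {a b : V → ℝ} {L : V → Finset (Fin d)} (h : IsSIRep G d a b L) : thinness G ≤ 2 ^ d := by
  let e : Finset (Fin d) ≃ Fin (2 ^ d) := Fintype.equivFinOfCardEq (by simp)
  exact thinness_le_of_consistent_key (e ∘ L) b fun u v w huv hvw hne hc =>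
    h.adj_of_right_le huv hvw (e.injective hc) hne

/-- Every graph satisfies `thin(G) ≤ 2^{si(G)}`. -/
theorem thinness_le_two_pow_si {V : Type*} [Fintype V] (G : SimpleGraph V) :
    thinness G ≤ 2 ^ si G := by
  obtain ⟨d, a, b, L, h⟩ := exists_isSIRep G
  obtain ⟨a, b, L, h⟩ := Nat.sInf_mem (⟨d, a, b, L, h⟩ : {d | ∃ a b L, IsSIRep G d a b L}.Nonempty)
  exact thinness_le_two_pow_of_isSIRep h
end
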